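/- Exactness for a ball inside a polyhedron: let S_A be the ball of radius r > 0 centered at the origin, given by the monic pencil A(x) = I_{n+1} + ∑_{p=1}^n (x_p/r)(E_{p,n+1}+E_{n+1,p}), and let S_B = {x : 1 + ∑_{p} b_{s,p} x_p ≥ 0 for s = 1,…,l} be a polyhedron (diagonal monic pencil B(x)) containing S_A. Then the (n+1)l × (n+1)l block matrix C defined by (C_{i,j})_{s,s} = r² b_{s,i}²/2 for i=j<n+1; = 1 − (r²/2)∑_p b_{s,p}² for i=j=n+1; = r² b_{s,i} b_{s,j}/2 for i,j < n+1, i≠j; = r b_{s,j}/2 for i=n+1, j<n+1; = r b_{s,i}/2 for j=n+1, i<n+1; and all off-diagonal entries (s≠t) zero, is positive semidefinite, has ∑_i C_{ii} = I_l, and satisfies B_p = ∑_{i,j} a^p_{ij} C_{ij} for all p. -/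

import Mathlib

/-!
The certificate is block diagonal, its `s`-th block being `(g gᵀ + (1 - r²‖b_s‖²) E_{n+1,n+1}) / 2`
with `g = (r b_s, 1)`. It is therefore psd as soon as `r‖b_s‖ ≤ 1`, and this is what the
containment says: the ball lies in `S_A` by Cauchy–Schwarz, and testing the half-space
`1 + b_s·x ≥ 0` at a suitable point `-t b_s` of the ball forces `r‖b_s‖ ≤ 1`. Each block has
trace `(r²‖b_s‖² + 1)/2 + (1 - r²‖b_s‖²)/2 = 1`, and pairing it with `(E_{p,n+1} + E_{n+1,p})/r`
reads off `b_{s,p}`.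
-/

open Matrix

/-- The explicit certificate matrix from Lemma 4.12 for the containment of a
ball of radius r in the polyhedron {x : ∀ s, 1 + b_s·x ≥ 0}. -/
noncomputable def ballCert {n l : ℕ} (r : ℝ) (b : Fin l → Fin n → ℝ) :
    Matrix (Fin (n + 1) × Fin l) (Fin (n + 1) × Fin l) ℝ :=
  Matrix.of fun x y =>
    if x.2 = y.2 then
      (if h : x.1 = y.1 ∧ x.1 ≠ Fin.last n then
        r ^ 2 * (b x.2 (x.1.castPred h.2)) ^ 2 / 2
      else if x.1 = y.1 ∧ x.1 = Fin.last n then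
        1 - r ^ 2 / 2 * ∑ p : Fin n, (b x.2 p) ^ 2
      else if h : x.1 ≠ Fin.last n ∧ y.1 ≠ Fin.last n ∧ x.1 ≠ y.1 then
        r ^ 2 * b x.2 (x.1.castPred h.1) * b x.2 (y.1.castPred h.2.1) / 2
      else if h : x.1 = Fin.last n ∧ y.1 ≠ Fin.last n then
        r * b x.2 (y.1.castPred h.2) / 2
      else if h : y.1 = Fin.last n ∧ x.1 ≠ Fin.last n then
        r * b x.2 (x.1.castPred h.2) / 2
      else 0)
    else 0

namespace Matrix

variable {m n o R : Type*} [Fintype m] [DecidableEq o]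

lemma PosSemidef.blockDiagonal [Fintype o] [Ring R] [PartialOrder R] [StarRing R]
    [IsOrderedAddMonoid R] {M : o → Matrix m m R} (hM : ∀ k, (M k).PosSemidef) :
    (Matrix.blockDiagonal M).PosSemidef := by
  refine .of_dotProduct_mulVec_nonneg (isHermitian_blockDiagonal_iff.2 fun k => (hM k).1)
    fun x => ?_
  have hsplit : star x ⬝ᵥ (Matrix.blockDiagonal M *ᵥ x) =
      ∑ k, star (fun i => x (i, k)) ⬝ᵥ (M k *ᵥ fun i => x (i, k)) := by
    simp only [dotProduct, mulVec, Fintype.sum_prod_type, blockDiagonal_apply', Pi.star_apply,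
      Finset.mul_sum, mul_ite, ite_mul, mul_zero, zero_mul, Finset.sum_ite_eq, Finset.mem_univ,
      if_true]
    exact Finset.sum_comm
  rw [hsplit]
  exact Finset.sum_nonneg fun k _ => (hM k).dotProduct_mulVec_nonneg _

lemma sum_blockDiagonal_apply_self [AddCommMonoid R] (M : o → Matrix m m R) (s t : o) :
    ∑ i, blockDiagonal M (i, s) (i, t) = diagonal (fun k => trace (M k)) s t := by
  by_cases h : s = t <;> simp [blockDiagonal_apply', trace, h]

lemma sum_sum_mul_blockDiagonal_apply [Fintype n] [NonUnitalNonAssocSemiring R]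
    (A : Matrix m n R) (M : o → Matrix m n R) (s t : o) :
    ∑ i, ∑ j, A i j * blockDiagonal M (i, s) (j, t) =
      diagonal (fun k => ∑ i, ∑ j, A i j * M k i j) s t := by
  by_cases h : s = t <;> simp [blockDiagonal_apply', h]

lemma sum_sum_single_mul_apply [Fintype n] [DecidableEq m] [DecidableEq n] [NonAssocSemiring R]
    (a : m) (b : n) (M : Matrix m n R) : ∑ i, ∑ j, single a b (1 : R) i j * M i j = M a b := by
  simp [single_apply, ite_and]

lemma dotProduct_single_add_single_mulVec [DecidableEq m] [CommRing R] (a c : m) (z : m → R) :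
    z ⬝ᵥ ((single a c 1 + single c a 1) *ᵥ z) = 2 * z a * z c := by
  simp only [add_mulVec, single_mulVec_eq, dotProduct_add, dotProduct_smul, dotProduct_single,
    smul_eq_mul]
  ring

end Matrix

section BallCertificate

variable {n : ℕ}

lemma posSemidef_one_add_sum_smul_single_add_single (v : Fin n → ℝ) (hv : ∑ p, v p ^ 2 ≤ 1) :
    ((1 : Matrix (Fin (n + 1)) (Fin (n + 1)) ℝ) + ∑ p, v p •
      (single p.castSucc (Fin.last n) 1 + single (Fin.last n) p.castSucc 1)).PosSemidef := by
  refine .of_dotProduct_mulVec_nonneg ?_ fun z => ?_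
  · simp [IsHermitian, transpose_sum, add_comm]
  set T := ∑ p, v p * z p.castSucc
  have hquad : z ⬝ᵥ ((1 + ∑ p : Fin n, v p •
      (single p.castSucc (Fin.last n) (1 : ℝ) + single (Fin.last n) p.castSucc 1)) *ᵥ z) =
      (∑ p : Fin n, z p.castSucc ^ 2 + z (Fin.last n) ^ 2) + 2 * z (Fin.last n) * T := by
    rw [add_mulVec, sum_mulVec, dotProduct_add, dotProduct_sum, one_mulVec, Finset.mul_sum]
    simp only [smul_mulVec, dotProduct_smul, dotProduct_single_add_single_mulVec, smul_eq_mul]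
    rw [← Fin.sum_univ_castSucc (fun i => z i ^ 2)]
    congr 1
    · simp [dotProduct, sq]
    · exact Finset.sum_congr rfl fun _ _ => by ring
  have hcs : T ^ 2 ≤ ∑ p : Fin n, z p.castSucc ^ 2 :=
    (Finset.sum_mul_sq_le_sq_mul_sq _ _ _).trans
      (mul_le_of_le_one_left (Finset.sum_nonneg fun _ _ => sq_nonneg _) hv)
  rw [star_trivial, hquad]
  nlinarith [sq_nonneg (z (Fin.last n) + T)]

lemma sq_mul_sum_sq_le_one_of_ball_subset_halfspace {ι : Type*} [Fintype ι] {r : ℝ} {c : ι → ℝ}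
    (h : ∀ x : ι → ℝ, ∑ i, x i ^ 2 ≤ r ^ 2 → 0 ≤ 1 + ∑ i, c i * x i) :
    r ^ 2 * ∑ i, c i ^ 2 ≤ 1 := by
  set B := ∑ i, c i ^ 2
  by_contra! hB
  have hpos : 0 < 1 + r ^ 2 * B := by linarith
  -- `-t • c` lies in the ball by AM-GM, and violates the inequality as soon as `r²B > 1`.
  set t := 2 * r ^ 2 / (1 + r ^ 2 * B)
  have hnorm : ∑ i, (-t * c i) ^ 2 = t ^ 2 * B := by
    simp only [Finset.mul_sum, B]
    exact Finset.sum_congr rfl fun _ _ => by ring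
  have hpair : ∑ i, c i * (-t * c i) = -(t * B) := by
    simp only [Finset.mul_sum, B, ← Finset.sum_neg_distrib]
    exact Finset.sum_congr rfl fun _ _ => by ring
  have hin : t ^ 2 * B ≤ r ^ 2 := by
    rw [div_pow, div_mul_eq_mul_div, div_le_iff₀ (by positivity)]
    nlinarith [sq_nonneg (1 - r ^ 2 * B), sq_nonneg r]
  have hout : 1 < t * B := by
    rw [div_mul_eq_mul_div, one_lt_div hpos]
    linarith
  have := h (fun i => -t * c i) (hnorm ▸ hin)
  rw [hpair] at this
  linarith

noncomputable def ballCertBlock (r : ℝ) (c : Fin n → ℝ) : Matrix (Fin (n + 1)) (Fin (n + 1)) ℝ :=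
  (2 : ℝ)⁻¹ • (vecMulVec (Fin.snoc (r • c) 1) (Fin.snoc (r • c) 1) +
    diagonal (Pi.single (Fin.last n) (1 - r ^ 2 * ∑ p, c p ^ 2)))

lemma ballCert_eq_blockDiagonal {l : ℕ} (r : ℝ) (b : Fin l → Fin n → ℝ) :
    ballCert r b = blockDiagonal fun s => ballCertBlock r (b s) := by
  ext ⟨i, s⟩ ⟨j, t⟩
  rw [blockDiagonal_apply']
  by_cases hst : s = t
  · subst hst
    rcases Fin.eq_castSucc_or_eq_last i with ⟨p, rfl⟩ | rfl <;>
      rcases Fin.eq_castSucc_or_eq_last j with ⟨q, rfl⟩ | rfl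
    on_goal 1 => obtain rfl | hpq := eq_or_ne p q
    all_goals
      simp only [*, ballCert, ballCertBlock, of_apply, Matrix.smul_apply, Matrix.add_apply,
        vecMulVec_apply, Fin.snoc_last, Fin.snoc_castSucc, Fin.castPred_castSucc, Fin.castSucc_inj,
        Fin.castSucc_ne_last, (Fin.castSucc_ne_last _).symm, diagonal_apply_eq, diagonal_apply_ne,
        Pi.single_eq_same, Pi.single_eq_of_ne (Fin.castSucc_ne_last _), Pi.smul_apply, smul_eq_mul,
        ne_eq, not_false_eq_true, not_true_eq_false, and_true, and_false, ↓reduceIte, ↓reduceDIte]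
      ring
  · simp [ballCert, hst]

lemma ballCertBlock_posSemidef {r : ℝ} {c : Fin n → ℝ} (h : r ^ 2 * ∑ p, c p ^ 2 ≤ 1) :
    (ballCertBlock r c).PosSemidef :=
  .smul ((posSemidef_vecMulVec_self_star _).add
    (.diagonal (Pi.single_nonneg.2 (sub_nonneg.2 h)))) (by norm_num)

lemma trace_ballCertBlock (r : ℝ) (c : Fin n → ℝ) : trace (ballCertBlock r c) = 1 := by
  rw [ballCertBlock, trace_smul, trace_add, trace_vecMulVec, trace_diagonal, Finset.sum_pi_single']
  simp only [dotProduct, Fin.sum_univ_castSucc, Fin.snoc_castSucc, Fin.snoc_last, Pi.smul_apply,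
    smul_eq_mul, Finset.mem_univ, if_true, Finset.mul_sum]
  ring_nf

lemma sum_sum_single_add_single_mul_ballCertBlock {r : ℝ} (hr : r ≠ 0) (c : Fin n → ℝ)
    (p : Fin n) :
    ∑ i, ∑ j, ((r⁻¹ • (single p.castSucc (Fin.last n) 1 + single (Fin.last n) p.castSucc 1) :
      Matrix (Fin (n + 1)) (Fin (n + 1)) ℝ)) i j * ballCertBlock r c i j = c p := by
  simp only [Matrix.smul_apply, Matrix.add_apply, smul_eq_mul, mul_assoc, add_mul, mul_add,
    Finset.sum_add_distrib, ← Finset.mul_sum, sum_sum_single_mul_apply]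
  simp only [ballCertBlock, Matrix.smul_apply, Matrix.add_apply, vecMulVec_apply, Fin.snoc_castSucc,
    Fin.snoc_last, Pi.smul_apply, smul_eq_mul, diagonal_apply_ne _ (Fin.castSucc_ne_last p),
    diagonal_apply_ne _ (Fin.castSucc_ne_last p).symm]
  field_simp
  ring

end BallCertificate

/-- Exactness of the containment criterion for a ball inside a polyhedron:
if the ball S_A of radius r (in normal form) is contained in the polyhedron
S_B, then the explicit matrix `ballCert r b` is psd, its diagonal blocks sum
to the identity, and B_p = ∑_{i,j} a^p_{ij} C_{ij} for all p. -/
theorem ball_in_polyhedron_exact {n l : ℕ} (r : ℝ) (hr : 0 < r)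
    (b : Fin l → Fin n → ℝ)
    (hsub : {x : Fin n → ℝ | ((1 : Matrix (Fin (n + 1)) (Fin (n + 1)) ℝ) +
        ∑ p : Fin n, (x p / r) •
          (Matrix.single p.castSucc (Fin.last n) (1 : ℝ) +
            Matrix.single (Fin.last n) p.castSucc 1)).PosSemidef} ⊆
      {x : Fin n → ℝ | ∀ s : Fin l, 0 ≤ 1 + ∑ p : Fin n, b s p * x p}) :
    (ballCert r b).PosSemidef ∧
    (∀ s t : Fin l, (∑ i : Fin (n + 1), ballCert r b (i, s) (i, t)) =
      (1 : Matrix (Fin l) (Fin l) ℝ) s t) ∧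
    (∀ p : Fin n, Matrix.diagonal (fun s : Fin l => b s p) =
      Matrix.of fun s t : Fin l =>
        ∑ i : Fin (n + 1), ∑ j : Fin (n + 1),
          ((r⁻¹ • (Matrix.single p.castSucc (Fin.last n) (1 : ℝ) +
            Matrix.single (Fin.last n) p.castSucc 1) :
              Matrix (Fin (n + 1)) (Fin (n + 1)) ℝ)) i j *
            ballCert r b (i, s) (j, t)) := by
  have hball : ∀ x : Fin n → ℝ, ∑ p, x p ^ 2 ≤ r ^ 2 → ∑ p, (x p / r) ^ 2 ≤ 1 := fun x hx => by
    simpa [div_pow, ← Finset.sum_div] using div_le_one_of_le₀ hx (sq_nonneg r)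
  have hb : ∀ s, r ^ 2 * ∑ p, b s p ^ 2 ≤ 1 := fun s =>
    sq_mul_sum_sq_le_one_of_ball_subset_halfspace fun x hx =>
      hsub (posSemidef_one_add_sum_smul_single_add_single _ (hball x hx)) s
  rw [ballCert_eq_blockDiagonal]
  refine ⟨.blockDiagonal fun s => ballCertBlock_posSemidef (hb s), fun s t => ?_, fun p => ?_⟩
  · simp [sum_blockDiagonal_apply_self, trace_ballCertBlock]
  · ext s t
    rw [of_apply, sum_sum_mul_blockDiagonal_apply]
    simp only [sum_sum_single_add_single_mul_ballCertBlock hr.ne']
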